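/- arXiv:1601.01891 — 2 statements merged into one kernel-verified Lean document; each statement's English description precedes it below -/
import Mathlib

section
/- If L is a D-visit from λ in a k-ary tree U, then the set of elements of L is a subtree of U_D(λ), the tree of all extensions of λ in U whose added suffix uses only colors from D; moreover, if L is D-complete then the set of elements of L equals U_D(λ). -/
/-- A `k`-ary tree: a prefix-closed set of finite lists over colors `< k`,
containing the empty list. -/
def IsKTree (k : ℕ) (U : Set (List ℕ)) : Prop :=
  [] ∈ U ∧ (∀ l ∈ U, ∀ p : List ℕ, p <+: l → p ∈ U) ∧ ∀ l ∈ U, ∀ c ∈ l, c < k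

/-- `L` is `D`-complete: every child (in `U`) with color in `D` of a node of `L` is in `L`. -/
def DComplete (U : Set (List ℕ)) (D : List ℕ) (L : List (List ℕ)) : Prop :=
  ∀ μ ∈ L, ∀ d ∈ D, μ ++ [d] ∈ U → μ ++ [d] ∈ L

/-- `ν` is the `n`-th `d`-expansion of `M`: `ν = μ ++ [d] ∈ U` for some `μ ∈ M`, and exactly
`n` nodes of `M` lexicographically below `μ` have a `d`-child in `U`. -/
def DExpansion (U : Set (List ℕ)) (M : List (List ℕ)) (n d : ℕ) (ν : List ℕ) : Prop :=
  ν ∈ U ∧ ∃ μ ∈ M, ν = μ ++ [d] ∧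
    {η | η ∈ M ∧ η ++ [d] ∈ U ∧ List.Lex (· < ·) η μ}.ncard = n

/-- `DVisit U D lam L` : `L` is a `D`-visit of `U` from `lam`. -/
inductive DVisit (U : Set (List ℕ)) : List ℕ → List ℕ → List (List ℕ) → Prop
  | base (lam : List ℕ) : lam ∈ U → DVisit U [] lam [lam]
  | step (d : ℕ) (D : List ℕ) (lam : List ℕ) (M : List (List ℕ))
      (Ls : List (List (List ℕ))) :
      DVisit U D lam M →
      (1 < Ls.length → DComplete U D M) →
      (∀ j : Fin Ls.length, Ls.get j ≠ []) →
      (∀ j : Fin Ls.length, DExpansion U M j.1 d ((Ls.get j).headI)) →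
      (∀ j : Fin Ls.length, DVisit U (D ++ [d]) ((Ls.get j).headI) (Ls.get j)) →
      (∀ j : Fin Ls.length, j.1 + 1 < Ls.length → DComplete U (d :: D) (Ls.get j)) →
      DVisit U (d :: D) lam (M ++ Ls.flatten)

/-- `U_D(lam)`: the nodes of `U` extending `lam` by a suffix with colors only from `D`. -/
def subtreeD (U : Set (List ℕ)) (D : List ℕ) (lam : List ℕ) : Set (List ℕ) :=
  {μ | μ ∈ U ∧ ∃ η : List ℕ, μ = lam ++ η ∧ ∀ c ∈ η, c ∈ D}

/-- `f` enumerates the complete `D`-visit of `U` from `lam`: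
each initial segment `[f 0, …, f m]` is a `D`-visit from `lam`. -/
def Enumerates (U : Set (List ℕ)) (D lam : List ℕ) (f : ℕ → List ℕ) : Prop :=
  ∀ m : ℕ, DVisit U D lam ((List.range (m + 1)).map f)

/-- `μ` is stable for the enumeration `f`: all later nodes are proper descendants of `μ`. -/
def Stable (f : ℕ → List ℕ) (μ : List ℕ) : Prop :=
  ∃ m, f m = μ ∧ ∀ n, m < n → μ <+: f n ∧ μ ≠ f n

/-- `r` is an infinite branch of the tree `T` (of finite lists): an infinite chain
under the prefix order, downward closed within `T`. -/
def IsInfBranchL (T : Set (List ℕ)) (r : Set (List ℕ)) : Prop :=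
  r ⊆ T ∧ r.Infinite ∧ (∀ μ ∈ r, ∀ ν ∈ r, μ <+: ν ∨ ν <+: μ) ∧
  (∀ μ ∈ r, ∀ η ∈ T, η <+: μ → η ∈ r)

/-!
Induction on the visit `M * L₀ * … * L_{n-1}`: each block `L_j` is a `(D ++ [d])`-visit from a
`d`-child `μ₀ ++ [d]` of some `μ₀ ∈ M`, so its nodes extend `λ` by colors of `d :: D`, and a
prefix above `λ` of one of its nodes is a prefix of `μ₀` (so in `M`), the head `μ₀ ++ [d]`, or
inside the block. Conversely, a `D`-complete list containing `λ` contains every `λ ++ η ∈ U`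
with colors of `η` in `D`, by induction on `η` from the right, as `U` is prefix closed.
-/

lemma List.headI_mem {α : Type*} [Inhabited α] {l : List α} (h : l ≠ []) : l.headI ∈ l := by
  cases l with
  | nil => exact absurd rfl h
  | cons a t => exact List.mem_cons_self

section subtreeD

variable {U : Set (List ℕ)} {D D' lam μ ν : List ℕ}

lemma prefix_of_mem_subtreeD (h : μ ∈ subtreeD U D lam) : lam <+: μ := by
  obtain ⟨-, η, rfl, -⟩ := h
  exact List.prefix_append lam η

lemma subtreeD_mono (hD : D ⊆ D') : subtreeD U D lam ⊆ subtreeD U D' lam :=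
  fun _ ⟨hμ, η, heq, hη⟩ => ⟨hμ, η, heq, fun c hc => hD (hη c hc)⟩

lemma mem_subtreeD_trans (hμ : μ ∈ subtreeD U D lam) (hν : ν ∈ subtreeD U D μ) :
    ν ∈ subtreeD U D lam := by
  obtain ⟨-, η, rfl, hη⟩ := hμ
  obtain ⟨hνU, η', rfl, hη'⟩ := hν
  refine ⟨hνU, η ++ η', List.append_assoc .., fun c hc => ?_⟩
  rcases List.mem_append.1 hc with hc | hc
  exacts [hη c hc, hη' c hc]

lemma append_singleton_mem_subtreeD {d : ℕ} (hμ : μ ∈ subtreeD U D lam) (hd : d ∈ D)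
    (hU : μ ++ [d] ∈ U) : μ ++ [d] ∈ subtreeD U D lam :=
  mem_subtreeD_trans hμ ⟨hU, [d], rfl, by simpa using hd⟩

end subtreeD

namespace DVisit

variable {U : Set (List ℕ)} {D lam : List ℕ} {L : List (List ℕ)}

lemma start_mem (h : DVisit U D lam L) : lam ∈ L := by
  induction h with
  | base lam _ => exact List.mem_singleton_self lam
  | step _ _ _ _ _ _ _ _ _ _ _ ihM => exact List.mem_append_left _ ihM

lemma subset_subtreeD (h : DVisit U D lam L) : ∀ μ ∈ L, μ ∈ subtreeD U D lam := by
  induction h with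
  | base lam hlam =>
    intro μ hμ
    rw [List.mem_singleton.1 hμ]
    exact ⟨hlam, [], by simp⟩
  | step d D lam M Ls _ _ _ hexp _ _ ihM ihs =>
    have hDd : D ⊆ d :: D := List.subset_cons_self d D
    intro μ hμ
    rcases List.mem_append.1 hμ with hμ | hμ
    · exact subtreeD_mono hDd (ihM μ hμ)
    obtain ⟨l, hl, hμl⟩ := List.mem_flatten.1 hμ
    obtain ⟨j, rfl⟩ := List.mem_iff_get.1 hl
    obtain ⟨hheadU, μ₀, hμ₀, hhead, -⟩ := hexp j
    have hhead_mem : (Ls.get j).headI ∈ subtreeD U (d :: D) lam := by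
      rw [hhead] at hheadU ⊢
      exact append_singleton_mem_subtreeD (subtreeD_mono hDd (ihM μ₀ hμ₀))
        List.mem_cons_self hheadU
    refine mem_subtreeD_trans hhead_mem (subtreeD_mono ?_ (ihs j μ hμl))
    simp [List.subset_def, or_comm]

lemma mem_of_prefix (h : DVisit U D lam L) :
    ∀ μ ∈ L, ∀ η : List ℕ, lam <+: η → η <+: μ → η ∈ L := by
  induction h with
  | base lam _ =>
    intro μ hμ η hlη hημ
    rw [List.mem_singleton.1 hμ] at hημ
    exact List.mem_singleton.2 (hημ.eq_of_length_le hlη.length_le)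
  | step d D lam M Ls _ _ hne hexp hvis _ ihM ihs =>
    intro μ hμ η hlη hημ
    rcases List.mem_append.1 hμ with hμ | hμ
    · exact List.mem_append_left _ (ihM μ hμ η hlη hημ)
    obtain ⟨l, hl, hμl⟩ := List.mem_flatten.1 hμ
    obtain ⟨j, rfl⟩ := List.mem_iff_get.1 hl
    have mem_of_mem_block : ∀ ν ∈ Ls.get j, ν ∈ M ++ Ls.flatten := fun ν hν =>
      List.mem_append_right _ (List.mem_flatten.2 ⟨_, hl, hν⟩)
    obtain ⟨-, μ₀, hμ₀, hhead, -⟩ := hexp j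
    have hhead_μ : (Ls.get j).headI <+: μ := prefix_of_mem_subtreeD ((hvis j).subset_subtreeD μ hμl)
    rcases List.prefix_or_prefix_of_prefix hημ hhead_μ with hη | hη
    · rw [hhead] at hη
      rcases List.prefix_concat_iff.1 hη with hη | hη
      · rw [hη, ← hhead]
        exact mem_of_mem_block _ (List.headI_mem (hne j))
      · exact List.mem_append_left _ (ihM μ₀ hμ₀ η hlη hη)
    · exact mem_of_mem_block η (ihs j μ hμl η hη hημ)

end DVisit

lemma DComplete.subtreeD_subset {U : Set (List ℕ)} {D lam : List ℕ} {L : List (List ℕ)}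
    (hU : ∀ l ∈ U, ∀ p : List ℕ, p <+: l → p ∈ U) (hL : DComplete U D L) (hlam : lam ∈ L) :
    subtreeD U D lam ⊆ {μ | μ ∈ L} := by
  rintro _ ⟨hμU, η, rfl, hη⟩
  induction η using List.reverseRecOn with
  | nil => simpa using hlam
  | append_singleton η c ih =>
    rw [← List.append_assoc] at hμU ⊢
    have hpre : lam ++ η ∈ U := hU _ hμU _ (List.prefix_append _ [c])
    exact hL _ (ih (fun x hx => hη x (List.mem_append_left _ hx)) hpre) c (hη c (by simp)) hμU

theorem dvisit_subtreeD_general (k : ℕ) (U : Set (List ℕ)) (hU : IsKTree k U)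
    (D : List ℕ)
    (lam : List ℕ)
    (L : List (List ℕ)) (hL : DVisit U D lam L) :
    (∀ μ ∈ L, μ ∈ subtreeD U D lam) ∧ lam ∈ L ∧
      (∀ μ ∈ L, ∀ η : List ℕ, lam <+: η → η <+: μ → η ∈ L) ∧
      (DComplete U D L → {μ | μ ∈ L} = subtreeD U D lam) :=
  ⟨hL.subset_subtreeD, hL.start_mem, hL.mem_of_prefix, fun hcomp =>
    Set.Subset.antisymm hL.subset_subtreeD (hcomp.subtreeD_subset hU.2.1 hL.start_mem)⟩

/-- A D-visit from lam is a subtree of U_D(lam), and equals U_D(lam)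
whenever it is D-complete. -/
theorem dvisit_subtreeD (k : ℕ) (U : Set (List ℕ)) (hU : IsKTree k U)
    (D : List ℕ) (hDnd : D.Nodup) (hDk : ∀ d ∈ D, d < k)
    (lam : List ℕ) (hlam : lam ∈ U)
    (L : List (List ℕ)) (hL : DVisit U D lam L) :
    (∀ μ ∈ L, μ ∈ subtreeD U D lam) ∧ lam ∈ L ∧
      (∀ μ ∈ L, ∀ η : List ℕ, lam <+: η → η <+: μ → η ∈ L) ∧
      (DComplete U D L → {μ | μ ∈ L} = subtreeD U D lam) :=
  dvisit_subtreeD_general k U hU D lam L hL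
end

section
/- Let U_D(λ) be infinite with D = ⟨d₀,…,d_{h−1}⟩, h > 0, and suppose the complete D-visit from λ contains two nodes one of which is the d₀-child of the other. Then the visit contains a node f(n), n > 0, which is stable and is the d₀-child of another node of the visit. -/
/-!
Call a node `DFree` if it extends `lam` by a path avoiding `d`. A `(d :: D')`-visit is the
`d`-free `D'`-visit `M` followed by blocks, each headed by the `d`-child of a node of `M` and
consisting of extensions of that head; distinct blocks have distinct heads, so a visit has no
repetitions. Hence the positions `n` at which `f n` is the `d`-child of a `d`-free node are
finitely many (at most one per node of the finite `d`-free initial part of the enumeration),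
and by hypothesis there is one. The last such position `N` heads the final block of every
longer initial segment of the enumeration, so all later nodes properly extend `f N`.
-/

theorem List.eq_of_append_cons_eq_of_notMem {α : Type*} [DecidableEq α] {a : α}
    {l₁ l₂ r₁ r₂ : List α} (h₁ : a ∉ l₁) (h₂ : a ∉ l₂)
    (h : l₁ ++ a :: r₁ = l₂ ++ a :: r₂) : l₁ = l₂ := by
  have hlen : l₁.length = l₂.length := by
    simpa [List.idxOf_append_of_notMem h₁, List.idxOf_append_of_notMem h₂] using
      congrArg (List.idxOf a) h
  exact (List.append_inj h hlen).1

theorem List.mem_map_range_succ_of_le {α : Type*} (f : ℕ → α) {i q : ℕ} (hiq : i ≤ q) :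
    f i ∈ (List.range (q + 1)).map f :=
  List.mem_map_of_mem (List.mem_range.2 (Nat.lt_succ_of_le hiq))

def DFree (lam : List ℕ) (d : ℕ) (x : List ℕ) : Prop :=
  ∃ η, d ∉ η ∧ x = lam ++ η

section DFree

variable {lam : List ℕ} {d : ℕ}

theorem dFree_self : DFree lam d lam := ⟨[], List.not_mem_nil, (List.append_nil lam).symm⟩

theorem not_dFree_append_of_mem {η : List ℕ} (h : d ∈ η) : ¬ DFree lam d (lam ++ η) := by
  rintro ⟨η', hη', he⟩
  exact hη' (List.append_cancel_left he ▸ h)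

theorem DFree.not_dFree_append {y : List ℕ} (hy : DFree lam d y) (σ : List ℕ) :
    ¬ DFree lam d (y ++ [d] ++ σ) := by
  obtain ⟨η, -, rfl⟩ := hy
  simpa using not_dFree_append_of_mem (lam := lam) (η := η ++ d :: σ) (by simp)

theorem DFree.eq_of_append_eq {y y' σ σ' : List ℕ} (hy : DFree lam d y) (hy' : DFree lam d y')
    (h : y ++ [d] ++ σ = y' ++ [d] ++ σ') : y = y' := by
  obtain ⟨η, hη, rfl⟩ := hy
  obtain ⟨η', hη', rfl⟩ := hy'
  simp only [List.append_assoc, List.singleton_append, List.append_cancel_left_eq] at h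
  rw [List.eq_of_append_cons_eq_of_notMem hη hη' h]

end DFree

namespace DVisit

variable {U : Set (List ℕ)} {D lam : List ℕ} {L : List (List ℕ)}

theorem eq_cons (h : DVisit U D lam L) :
    ∃ t, L = lam :: t := by
  induction h with
  | base lam _ => exact ⟨[], rfl⟩
  | step _ _ _ _ _ _ _ _ _ _ _ ih _ =>
    obtain ⟨t, rfl⟩ := ih
    exact ⟨_, rfl⟩

theorem exists_eq_append_of_mem (h : DVisit U D lam L) {x : List ℕ} (hx : x ∈ L) :
    ∃ η, x = lam ++ η ∧ ∀ c ∈ η, c ∈ D := by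
  induction h generalizing x with
  | base lam _ => exact ⟨[], by simpa using hx, by simp⟩
  | step d D lam M Ls _ _ _ hexp _ _ ihM ihLs =>
    rcases List.mem_append.1 hx with hx | hx
    · obtain ⟨η, rfl, hη⟩ := ihM hx
      exact ⟨η, rfl, fun c hc => List.mem_cons_of_mem d (hη c hc)⟩
    · obtain ⟨l, hl, hxl⟩ := List.mem_flatten.1 hx
      obtain ⟨j, rfl⟩ := List.get_of_mem hl
      obtain ⟨σ, rfl, hσ⟩ := ihLs j hxl
      obtain ⟨-, μ, hμ, hhead, -⟩ := hexp j
      obtain ⟨η, rfl, hη⟩ := ihM hμ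
      refine ⟨η ++ d :: σ, by rw [hhead]; simp, fun c hc => ?_⟩
      grind

theorem dFree_of_mem (h : DVisit U D lam L) {d : ℕ} (hd : d ∉ D) {x : List ℕ} (hx : x ∈ L) :
    DFree lam d x := by
  obtain ⟨η, rfl, hη⟩ := h.exists_eq_append_of_mem hx
  exact ⟨η, fun hdη => hd (hη d hdη), rfl⟩

theorem exists_dFree_of_mem_expansion {D₂ : List ℕ} {M l : List (List ℕ)} {d j : ℕ}
    (hM : DVisit U D lam M) (hd : d ∉ D) (hexp : DExpansion U M j d l.headI)
    (hl : DVisit U D₂ l.headI l) {x : List ℕ} (hx : x ∈ l) :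
    ∃ μ ∈ M, DFree lam d μ ∧ l.headI = μ ++ [d] ∧ ∃ σ, x = μ ++ [d] ++ σ := by
  obtain ⟨-, μ, hμ, hhead, -⟩ := hexp
  obtain ⟨σ, rfl, -⟩ := hl.exists_eq_append_of_mem hx
  exact ⟨μ, hμ, hM.dFree_of_mem hd hμ, hhead, σ, by rw [hhead]⟩

theorem nodup (h : DVisit U D lam L) (hD : D.Nodup) : L.Nodup := by
  induction h with
  | base => exact List.nodup_singleton _
  | step d D lam M Ls hM _ _ hexp hvis _ ihM ihLs =>
    obtain ⟨hd, hD⟩ := List.nodup_cons.1 hD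
    have hblock (j : Fin Ls.length) {x : List ℕ} (hx : x ∈ Ls.get j) :=
      hM.exists_dFree_of_mem_expansion hd (hexp j) (hvis j) hx
    refine List.nodup_append.2 ⟨ihM hD, List.nodup_flatten.2 ⟨?_, ?_⟩, ?_⟩
    · intro l hl
      obtain ⟨j, rfl⟩ := List.get_of_mem hl
      exact ihLs j (List.nodup_append_comm.1 (List.nodup_cons.2 ⟨hd, hD⟩))
    · refine List.pairwise_iff_get.2 fun i j hij x hxi hxj => hij.ne ?_
      obtain ⟨μ, -, hμ, hhi, σ, rfl⟩ := hblock i hxi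
      obtain ⟨μ', -, hμ', hhj, σ', hx⟩ := hblock j hxj
      obtain ⟨-, ν, -, hν, hi⟩ := hexp i
      obtain ⟨-, ν', -, hν', hj⟩ := hexp j
      have hνμ : ν = μ := List.append_cancel_right (hν.symm.trans hhi)
      have hν'μ' : ν' = μ' := List.append_cancel_right (hν'.symm.trans hhj)
      exact Fin.ext (by rw [← hi, ← hj, hνμ, hν'μ', hμ.eq_of_append_eq hμ' hx])
    · intro x hxM y hy hxy
      obtain ⟨l, hl, hyl⟩ := List.mem_flatten.1 hy
      obtain ⟨j, rfl⟩ := List.get_of_mem hl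
      obtain ⟨μ, -, hμ, -, σ, rfl⟩ := hblock j hyl
      exact hμ.not_dFree_append σ (hxy ▸ hM.dFree_of_mem hd hxM)

theorem exists_last_block {d : ℕ} (h : DVisit U (d :: D) lam L) (hd : d ∉ D) {x : List ℕ}
    (hx : x ∈ L) (hxd : ¬ DFree lam d x) :
    ∃ L₁ y t, DFree lam d y ∧ y ∈ L₁ ∧ L = L₁ ++ (y ++ [d]) :: t ∧
      ∀ z ∈ (y ++ [d]) :: t, y ++ [d] <+: z := by
  cases h with
  | step _ _ _ M Ls hM _ _ hexp hvis _ =>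
    have hLs : Ls ≠ [] := by
      rintro rfl
      exact hxd (hM.dFree_of_mem hd (by simpa using hx))
    let j : Fin Ls.length := ⟨Ls.length - 1, by have := List.length_pos_iff.2 hLs; omega⟩
    have hlast : Ls.dropLast ++ [Ls.get j] = Ls := by
      simpa [j, List.getLast_eq_getElem] using List.dropLast_append_getLast hLs
    obtain ⟨t, ht⟩ := (hvis j).eq_cons
    obtain ⟨μ, hμM, hμ, hhead, -⟩ := hM.exists_dFree_of_mem_expansion hd (hexp j) (hvis j)
      (x := (Ls.get j).headI) (by rw [ht]; exact List.mem_cons_self)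
    refine ⟨M ++ Ls.dropLast.flatten, μ, t, hμ, List.mem_append_left _ hμM, ?_, ?_⟩
    · rw [← hlast, List.flatten_append, ht, hhead]
      simp
    · intro z hz
      rw [← hhead, ← ht] at hz
      obtain ⟨σ, rfl, -⟩ := (hvis j).exists_eq_append_of_mem hz
      exact ⟨σ, by rw [hhead]⟩

end DVisit

namespace Enumerates

variable {U : Set (List ℕ)} {d : ℕ} {D lam : List ℕ} {f : ℕ → List ℕ}

theorem exists_eq_append (hf : Enumerates U D lam f) (i : ℕ) : ∃ η, f i = lam ++ η :=
  ((hf i).exists_eq_append_of_mem (List.mem_map_range_succ_of_le f le_rfl)).imp fun _ h => h.1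

theorem apply_zero (hf : Enumerates U D lam f) : f 0 = lam := by
  obtain ⟨t, ht⟩ := (hf 0).eq_cons
  exact (List.cons_eq_cons.1 ht).1

theorem injective (hf : Enumerates U D lam f) (hD : D.Nodup) : Function.Injective f := by
  intro a b hab
  have := (List.nodup_map_iff_inj_on List.nodup_range).1 ((hf (max a b)).nodup hD)
  exact this a (by simp) b (by simp) hab

theorem exists_last_block (hf : Enumerates U (d :: D) lam f) (hd : d ∉ D) {i q : ℕ}
    (hiq : i ≤ q) (hi : ¬ DFree lam d (f i)) :
    ∃ r m, DFree lam d (f m) ∧ f r = f m ++ [d] ∧ r ≤ q ∧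
      ∀ s, r ≤ s → s ≤ q → f r <+: f s := by
  obtain ⟨L₁, y, t, hy, hyL₁, hL, hpre⟩ :=
    (hf q).exists_last_block hd (List.mem_map_range_succ_of_le f hiq) hi
  obtain ⟨m, -, rfl⟩ := List.mem_map.1 (hL ▸ List.mem_append_left _ hyL₁)
  have hlen : L₁.length + (t.length + 1) = q + 1 := by simpa using (congrArg List.length hL).symm
  have hget (s : ℕ) (hs : s ≤ q) :
      f s = (L₁ ++ (f m ++ [d]) :: t)[s]'(by simp; omega) := by
    simp only [← hL, List.getElem_map, List.getElem_range]
  have hr : f L₁.length = f m ++ [d] := by simpa using hget L₁.length (by omega)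
  refine ⟨L₁.length, m, hy, hr, by omega, fun s hs hsq => hr ▸ hpre _ ?_⟩
  rw [hget s hsq, List.getElem_append_right hs]
  exact List.getElem_mem _

theorem not_dFree_of_le (hf : Enumerates U (d :: D) lam f) (hd : d ∉ D) {i j : ℕ}
    (hi : ¬ DFree lam d (f i)) (hij : i ≤ j) : ¬ DFree lam d (f j) := by
  obtain ⟨r, m, hm, hr, hrj, hpre⟩ := hf.exists_last_block hd hij hi
  obtain ⟨σ, hσ⟩ := hpre j hrj le_rfl
  rw [← hσ, hr]
  exact hm.not_dFree_append σ

theorem finite_dChildren (hf : Enumerates U (d :: D) lam f) (hD : (d :: D).Nodup) {n₀ : ℕ}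
    (hn₀ : ¬ DFree lam d (f n₀)) :
    {n | ∃ m, DFree lam d (f m) ∧ f n = f m ++ [d]}.Finite := by
  refine (((Set.finite_Iio n₀).image f).image (· ++ [d])).preimage (hf.injective hD).injOn
    |>.subset ?_
  rintro n ⟨m, hm, hn⟩
  have hmn₀ : m < n₀ :=
    lt_of_not_ge fun h => hf.not_dFree_of_le (List.nodup_cons.1 hD).1 hn₀ h hm
  exact ⟨f m, ⟨m, hmn₀, rfl⟩, hn.symm⟩

end Enumerates

theorem stable_d0_child_general (U : Set (List ℕ))
    (d : ℕ) (D' : List ℕ) (hDnd : (d :: D').Nodup)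
    (lam : List ℕ)
    (f : ℕ → List ℕ) (hf : Enumerates U (d :: D') lam f)
    (hex : ∃ m n : ℕ, f n = f m ++ [d]) :
    ∃ n, 0 < n ∧ Stable f (f n) ∧ ∃ m, f n = f m ++ [d] := by
  have hd : d ∉ D' := (List.nodup_cons.1 hDnd).1
  have hinj := hf.injective hDnd
  obtain ⟨n₀, hn₀⟩ : ∃ n₀, ¬ DFree lam d (f n₀) := by
    obtain ⟨m, n, hmn⟩ := hex
    obtain ⟨η, hη⟩ := hf.exists_eq_append m
    exact ⟨n, by rw [hmn, hη, List.append_assoc]; exact not_dFree_append_of_mem (by simp)⟩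
  have hBne : {n | ∃ m, DFree lam d (f m) ∧ f n = f m ++ [d]}.Nonempty := by
    obtain ⟨r, m, hm, hr, -⟩ := hf.exists_last_block hd le_rfl hn₀
    exact ⟨r, m, hm, hr⟩
  obtain ⟨N, ⟨m, hm, hN⟩, hNmax⟩ :=
    Set.exists_max_image _ id (hf.finite_dChildren hDnd hn₀) hBne
  have hNd : ¬ DFree lam d (f N) := by simpa [hN] using hm.not_dFree_append []
  refine ⟨N, Nat.pos_of_ne_zero fun h => hNd (h ▸ hf.apply_zero ▸ dFree_self),
    ⟨N, rfl, fun q hq => ?_⟩, m, hN⟩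
  obtain ⟨r, m', hm', hr, hrq, hpre⟩ := hf.exists_last_block hd hq.le hNd
  have hrN : r = N := by
    obtain ⟨σ, hσ⟩ := hpre N (hNmax r ⟨m', hm', hr⟩) hq.le
    apply hinj
    rw [hr, hN, hm'.eq_of_append_eq hm (σ' := []) (by rw [← hr, hσ, hN, List.append_nil])]
  subst hrN
  exact ⟨hpre q hq.le le_rfl, fun h => hq.ne (hinj h)⟩

/-- if the complete D-visit (D = d₀ :: D') contains a d₀-child of one
of its nodes, then it contains a stable node f n, n > 0, which is the d₀-child of
another node of the visit. -/
theorem stable_d0_child (k : ℕ) (U : Set (List ℕ)) (hU : IsKTree k U)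
    (d : ℕ) (D' : List ℕ) (hDnd : (d :: D').Nodup) (hDk : ∀ c ∈ d :: D', c < k)
    (lam : List ℕ) (hlam : lam ∈ U)
    (hinf : (subtreeD U (d :: D') lam).Infinite)
    (f : ℕ → List ℕ) (hf : Enumerates U (d :: D') lam f)
    (hex : ∃ m n : ℕ, f n = f m ++ [d]) :
    ∃ n, 0 < n ∧ Stable f (f n) ∧ ∃ m, f n = f m ++ [d] :=
  stable_d0_child_general U d D' hDnd lam f hf hex
end
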